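/- arXiv:1709.09707 — 5 statements merged into one kernel-verified Lean document; each statement's English description precedes it below -/
import Mathlib

section
/- If a hyperring structure (R, ⊙, ⊞, 1, 0) is required only to satisfy (H0) and (H1) for its additive hyperoperation, then the reversibility axiom (H2) follows automatically from the distributive law: x ∈ y ⊞ z if and only if z ∈ x ⊞ (-y). -/
/-- The setwise extension of a hyperoperation. -/
def sAdd {R : Type*} (add : R → R → Set R) (A B : Set R) : Set R :=
  ⋃ a ∈ A, ⋃ b ∈ B, add a b

/-- A hyperring-like structure in which the additive hyperoperation is only
required to satisfy (H0) and (H1) (but not the reversibility axiom (H2)). -/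
structure PreHyperring (R : Type*) where
  add : R → R → Set R
  zero : R
  neg : R → R
  mul : R → R → R
  one : R
  add_nonempty : ∀ x y, (add x y).Nonempty
  add_comm : ∀ x y, add x y = add y x
  add_assoc : ∀ x y z, sAdd add (add x y) {z} = sAdd add {x} (add y z)
  zero_add : ∀ x, add zero x = {x}
  neg_mem : ∀ x, zero ∈ add x (neg x)
  neg_unique : ∀ x y, zero ∈ add x y → y = neg x
  mul_comm : ∀ x y, mul x y = mul y x
  mul_assoc : ∀ x y z, mul (mul x y) z = mul x (mul y z)
  one_mul : ∀ x, mul one x = x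
  zero_mul : ∀ x, mul zero x = zero
  distrib : ∀ a x y, (fun t => mul a t) '' add x y = add (mul a x) (mul a y)

namespace PreHyperring

variable {R : Type*} (H : PreHyperring R)

lemma neg_one_mul (a : R) : H.mul (H.neg H.one) a = H.neg a := by
  have h0 : H.zero ∈ H.add H.one (H.neg H.one) := H.neg_mem H.one
  have him : H.mul a H.zero ∈ (fun t => H.mul a t) '' H.add H.one (H.neg H.one) :=
    Set.mem_image_of_mem _ h0
  rw [H.distrib] at him
  rw [H.mul_comm a H.zero, H.zero_mul, H.mul_comm a H.one, H.one_mul] at him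
  have := H.neg_unique a _ him
  rw [← this, H.mul_comm]

lemma neg_neg (a : R) : H.neg (H.neg a) = a := by
  have h : H.zero ∈ H.add (H.neg a) a := by
    rw [H.add_comm]; exact H.neg_mem a
  exact (H.neg_unique _ _ h).symm

lemma neg_image (x y : R) : H.neg '' H.add x y = H.add (H.neg x) (H.neg y) := by
  have := H.distrib (H.neg H.one) x y
  simp only [H.neg_one_mul] at this
  exact this

lemma mem_sAdd {add : R → R → Set R} {A B : Set R} {t : R} :
    t ∈ sAdd add A B ↔ ∃ a ∈ A, ∃ b ∈ B, t ∈ add a b := by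
  simp [sAdd]

lemma rev_forward {x y z : R} (h : x ∈ H.add y z) : z ∈ H.add x (H.neg y) := by
  have hnx : H.neg x ∈ H.add (H.neg y) (H.neg z) := by
    rw [← H.neg_image]; exact Set.mem_image_of_mem _ h
  have h0 : H.zero ∈ sAdd H.add {x} (H.add (H.neg y) (H.neg z)) := by
    rw [mem_sAdd]
    exact ⟨x, rfl, H.neg x, hnx, H.neg_mem x⟩
  rw [← H.add_assoc, mem_sAdd] at h0
  obtain ⟨w, hw, b, hb, h0⟩ := h0
  rw [Set.mem_singleton_iff] at hb
  subst hb
  have hnz : H.neg z = H.neg w := H.neg_unique w _ h0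
  have : z = w := by
    calc z = H.neg (H.neg z) := (H.neg_neg z).symm
    _ = H.neg (H.neg w) := by rw [hnz]
    _ = w := H.neg_neg w
  rw [this]; exact hw

end PreHyperring

/-- In a hyperring satisfying only (H0) and (H1), the reversibility axiom (H2)
follows automatically from the distributive law. -/
theorem preHyperring_rev {R : Type*} (H : PreHyperring R) (x y z : R) :
    x ∈ H.add y z ↔ z ∈ H.add x (H.neg y) := by
  constructor
  · exact H.rev_forward
  · intro h
    have h1 : H.neg y ∈ H.add z (H.neg x) := H.rev_forward h
    have h2 : H.neg x ∈ H.add (H.neg y) (H.neg z) := H.rev_forward h1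
    rw [← H.neg_image] at h2
    obtain ⟨w, hw, hwx⟩ := h2
    have : w = x := by
      calc w = H.neg (H.neg w) := (H.neg_neg w).symm
      _ = H.neg (H.neg x) := by rw [hwx]
      _ = x := H.neg_neg x
    rwa [← this]
end

section
/- For any abelian group G and any self-inverse element ε of G, the weak hyperfield W(G, ε), with underlying set G ∪ {0}, multiplication extending that of G with 0 · x = 0, and hyperaddition given by 0 ⊞ x = {x}, x ⊞ (ε·x) = G ∪ {0} for x ≠ 0, and x ⊞ y = G for nonzero x, y with y ≠ ε·x, is a hyperfield. -/
/-- A hyperring: a commutative multiplicative monoid together with an additive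
hypergroup structure, satisfying absorption and distributivity. -/
structure Hyperring (R : Type*) where
  add : R → R → Set R
  zero : R
  neg : R → R
  mul : R → R → R
  one : R
  add_nonempty : ∀ x y, (add x y).Nonempty
  add_comm : ∀ x y, add x y = add y x
  add_assoc : ∀ x y z, sAdd add (add x y) {z} = sAdd add {x} (add y z)
  zero_add : ∀ x, add zero x = {x}
  neg_mem : ∀ x, zero ∈ add x (neg x)
  neg_unique : ∀ x y, zero ∈ add x y → y = neg x
  rev : ∀ x y z, x ∈ add y z ↔ z ∈ add x (neg y)
  mul_comm : ∀ x y, mul x y = mul y x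
  mul_assoc : ∀ x y z, mul (mul x y) z = mul x (mul y z)
  one_mul : ∀ x, mul one x = x
  zero_mul : ∀ x, mul zero x = zero
  distrib : ∀ a x y, (fun t => mul a t) '' add x y = add (mul a x) (mul a y)

/-- The hyperaddition of the weak hyperfield `W(G, ε)` on `G ∪ {0}`:
`0 ⊞ x = {x}`, `x ⊞ (ε·x) = G ∪ {0}` for `x ≠ 0`, and `x ⊞ y = G` for
nonzero `x, y` with `y ≠ ε·x`. -/
noncomputable def weakAdd (G : Type*) [CommGroup G] (ε : G) :
    WithZero G → WithZero G → Set (WithZero G) := fun x y =>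
  open Classical in
  if x = 0 then {y}
  else if y = 0 then {x}
  else if y = (ε : WithZero G) * x then Set.univ
  else {z : WithZero G | z ≠ 0}


section
variable {G : Type*} [CommGroup G] (ε : G)

lemma weakAdd_zero_left (y : WithZero G) : weakAdd G ε 0 y = {y} := by
  simp [weakAdd]

lemma weakAdd_zero_right (x : WithZero G) : weakAdd G ε x 0 = {x} := by
  rcases eq_or_ne x 0 with h | h <;> simp [weakAdd, h]

lemma eps_sq (hε : ε * ε = 1) : (ε : WithZero G) * ε = 1 := by
  rw [← WithZero.coe_mul, hε, WithZero.coe_one]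

lemma eps_swap (hε : ε * ε = 1) {x y : WithZero G} :
    y = (ε : WithZero G) * x ↔ x = (ε : WithZero G) * y := by
  constructor <;> rintro rfl <;> rw [← mul_assoc, eps_sq ε hε, one_mul]

lemma weakAdd_self {x : WithZero G} (hx : x ≠ 0) :
    weakAdd G ε x ((ε : WithZero G) * x) = Set.univ := by
  have h : (ε : WithZero G) * x ≠ 0 := mul_ne_zero WithZero.coe_ne_zero hx
  simp [weakAdd, hx, h]

lemma mem_weakAdd_of_ne {a x y : WithZero G} (hx : x ≠ 0) (hy : y ≠ 0) (ha : a ≠ 0) :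
    a ∈ weakAdd G ε x y := by
  unfold weakAdd
  rw [if_neg hx, if_neg hy]
  split_ifs with h
  · trivial
  · exact ha

lemma weakAdd_nonempty (x y : WithZero G) : (weakAdd G ε x y).Nonempty := by
  unfold weakAdd
  split_ifs
  · exact ⟨y, rfl⟩
  · exact ⟨x, rfl⟩
  · exact ⟨0, trivial⟩
  · exact ⟨1, one_ne_zero⟩

lemma weakAdd_comm (hε : ε * ε = 1) (x y : WithZero G) :
    weakAdd G ε x y = weakAdd G ε y x := by
  rcases eq_or_ne x 0 with hx | hx
  · subst hx; rw [weakAdd_zero_left, weakAdd_zero_right]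
  rcases eq_or_ne y 0 with hy | hy
  · subst hy; rw [weakAdd_zero_left, weakAdd_zero_right]
  unfold weakAdd
  rw [if_neg hx, if_neg hy, if_neg hy, if_neg hx]
  by_cases h : y = (ε : WithZero G) * x
  · rw [if_pos h, if_pos ((eps_swap ε hε).mp h)]
  · rw [if_neg h, if_neg (fun hc => h ((eps_swap ε hε).mpr hc))]

lemma weakAdd_assoc (hε : ε * ε = 1) (x y z : WithZero G) :
    sAdd (weakAdd G ε) (weakAdd G ε x y) {z} =
      sAdd (weakAdd G ε) {x} (weakAdd G ε y z) := by
  rcases eq_or_ne x 0 with hx | hx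
  · subst hx
    rw [weakAdd_zero_left]
    ext t
    simp [sAdd, weakAdd_zero_left]
  rcases eq_or_ne y 0 with hy | hy
  · subst hy
    rw [weakAdd_zero_right, weakAdd_zero_left]
  rcases eq_or_ne z 0 with hz | hz
  · subst hz
    rw [weakAdd_zero_right]
    ext t
    simp [sAdd, weakAdd_zero_right]
  have hεz : (ε : WithZero G) * z ≠ 0 := mul_ne_zero WithZero.coe_ne_zero hz
  have hεx : (ε : WithZero G) * x ≠ 0 := mul_ne_zero WithZero.coe_ne_zero hx
  have hmemL : weakAdd G ε ((ε : WithZero G) * z) z = Set.univ := by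
    have h := weakAdd_self ε hεz
    rwa [← mul_assoc, eps_sq ε hε, one_mul] at h
  have L : sAdd (weakAdd G ε) (weakAdd G ε x y) {z} = Set.univ := by
    apply Set.eq_univ_iff_forall.mpr
    intro t
    refine Set.mem_biUnion (mem_weakAdd_of_ne ε hx hy hεz) ?_
    refine Set.mem_biUnion rfl ?_
    rw [hmemL]; trivial
  have R : sAdd (weakAdd G ε) {x} (weakAdd G ε y z) = Set.univ := by
    apply Set.eq_univ_iff_forall.mpr
    intro t
    refine Set.mem_biUnion rfl ?_
    refine Set.mem_biUnion (mem_weakAdd_of_ne ε hy hz hεx) ?_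
    rw [weakAdd_self ε hx]; trivial
  rw [L, R]

lemma weakAdd_rev (hε : ε * ε = 1) (x y z : WithZero G) :
    x ∈ weakAdd G ε y z ↔ z ∈ weakAdd G ε x ((ε : WithZero G) * y) := by
  rcases eq_or_ne y 0 with hy | hy
  · subst hy
    rw [weakAdd_zero_left, mul_zero, weakAdd_zero_right]
    simp [eq_comm]
  have hεy : (ε : WithZero G) * y ≠ 0 := mul_ne_zero WithZero.coe_ne_zero hy
  rcases eq_or_ne z 0 with hz | hz
  · subst hz
    rw [weakAdd_zero_right, Set.mem_singleton_iff]
    rcases eq_or_ne x 0 with hx | hx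
    · subst hx
      rw [weakAdd_zero_left, Set.mem_singleton_iff]
      constructor
      · intro h; exact absurd h.symm hy
      · intro h; exact absurd h.symm hεy
    · unfold weakAdd
      rw [if_neg hx, if_neg hεy]
      by_cases h : (ε : WithZero G) * y = (ε : WithZero G) * x
      · rw [if_pos h]
        have hyx := mul_left_cancel₀ (WithZero.coe_ne_zero (a := ε)) h
        simp [hyx]
      · rw [if_neg h]
        constructor
        · rintro rfl; exact absurd rfl h
        · intro h0; exact absurd rfl h0
  · rcases eq_or_ne x 0 with hx | hx
    · subst hx
      rw [weakAdd_zero_left, Set.mem_singleton_iff]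
      unfold weakAdd
      rw [if_neg hy, if_neg hz]
      by_cases h : z = (ε : WithZero G) * y
      · rw [if_pos h]; simp [h]
      · rw [if_neg h]
        constructor
        · intro h0; exact absurd rfl h0
        · intro hz'; exact absurd hz' h
    · exact iff_of_true (mem_weakAdd_of_ne ε hy hz hx) (mem_weakAdd_of_ne ε hx hεy hz)

lemma weakAdd_distrib (a x y : WithZero G) :
    (fun t => a * t) '' weakAdd G ε x y = weakAdd G ε (a * x) (a * y) := by
  rcases eq_or_ne a 0 with ha | ha
  · subst ha
    have hc : (fun t => (0 : WithZero G) * t) = fun _ => (0 : WithZero G) :=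
      funext fun t => zero_mul t
    rw [hc, Set.Nonempty.image_const (weakAdd_nonempty ε x y), zero_mul, zero_mul,
      weakAdd_zero_left]
  rcases eq_or_ne x 0 with hx | hx
  · subst hx
    rw [weakAdd_zero_left, mul_zero, weakAdd_zero_left, Set.image_singleton]
  rcases eq_or_ne y 0 with hy | hy
  · subst hy
    rw [weakAdd_zero_right, mul_zero, weakAdd_zero_right, Set.image_singleton]
  have hax : a * x ≠ 0 := mul_ne_zero ha hx
  have hay : a * y ≠ 0 := mul_ne_zero ha hy
  by_cases h : y = (ε : WithZero G) * x
  · have h' : a * y = (ε : WithZero G) * (a * x) := by rw [h, mul_left_comm]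
    unfold weakAdd
    rw [if_neg hx, if_neg hy, if_pos h, if_neg hax, if_neg hay, if_pos h']
    exact Set.image_univ_of_surjective (mulLeft_bijective₀ a ha).surjective
  · have h' : a * y ≠ (ε : WithZero G) * (a * x) := by
      rw [mul_left_comm]
      exact fun hc => h (mul_left_cancel₀ ha hc)
    unfold weakAdd
    rw [if_neg hx, if_neg hy, if_neg h, if_neg hax, if_neg hay, if_neg h']
    ext t
    simp only [Set.mem_image, Set.mem_setOf_eq]
    constructor
    · rintro ⟨s, hs, rfl⟩; exact mul_ne_zero ha hs
    · intro ht
      exact ⟨a⁻¹ * t, mul_ne_zero (inv_ne_zero ha) ht,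
        by rw [← mul_assoc, mul_inv_cancel₀ ha, one_mul]⟩

end

/-- For any abelian group `G` and self-inverse `ε ∈ G`, the weak hyperfield
`W(G, ε)` is a hyperfield. -/
theorem weak_hyperfield_is_hyperfield (G : Type*) [CommGroup G] (ε : G)
    (hε : ε * ε = 1) :
    ∃ H : Hyperring (WithZero G), H.zero = 0 ∧ H.one = 1 ∧ H.mul = (· * ·) ∧
      H.add = weakAdd G ε ∧ H.zero ≠ H.one ∧
      ∀ x, x ≠ H.zero → ∃ y, H.mul x y = H.one := by
  refine ⟨{
    add := weakAdd G ε
    zero := 0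
    neg := fun x => (ε : WithZero G) * x
    mul := (· * ·)
    one := 1
    add_nonempty := weakAdd_nonempty ε
    add_comm := weakAdd_comm ε hε
    add_assoc := weakAdd_assoc ε hε
    zero_add := weakAdd_zero_left ε
    neg_mem := ?_
    neg_unique := ?_
    rev := weakAdd_rev ε hε
    mul_comm := mul_comm
    mul_assoc := mul_assoc
    one_mul := one_mul
    zero_mul := zero_mul
    distrib := weakAdd_distrib ε },
    rfl, rfl, rfl, rfl, zero_ne_one, fun x hx => ⟨x⁻¹, mul_inv_cancel₀ hx⟩⟩
  · intro x
    rcases eq_or_ne x 0 with hx | hx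
    · subst hx; simp [weakAdd_zero_left]
    · rw [weakAdd_self ε hx]; trivial
  · intro x y h
    rcases eq_or_ne x 0 with hx | hx
    · subst hx
      rw [weakAdd_zero_left, Set.mem_singleton_iff] at h
      show y = (ε:WithZero G) * 0
      rw [← h, mul_zero]
    rcases eq_or_ne y 0 with hy | hy
    · subst hy
      rw [weakAdd_zero_right, Set.mem_singleton_iff] at h
      exact absurd h.symm hx
    unfold weakAdd at h
    rw [if_neg hx, if_neg hy] at h
    by_cases hc : y = (ε : WithZero G) * x
    · exact hc
    · rw [if_neg hc] at h
      exact absurd rfl h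
end

section
/- Let M be a matroid with rank function r, and let C₁, C₂ be distinct circuits of M. Then C₁ and C₂ form a modular pair of circuits if and only if r(C₁ ∪ C₂) + r(C₁ ∩ C₂) = r(C₁) + r(C₂). -/
/-!
For distinct circuits `r(Cᵢ) + 1 = |Cᵢ|` and `C₁ ∩ C₂` is independent, so the rank equation says
that the nullity `|X| - r(X)` of `X = C₁ ∪ C₂` is exactly 2; by submodularity it is at least 2.
Deleting an element of a circuit inside `X` does not lower `r(X)`, so nullity strictly increases
along proper inclusions of unions of circuits: when it is 2, no union of two distinct circuits
(nullity ≥ 2) fits properly inside `X`. When it is ≥ 3, `X` minus any element still has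
nullity ≥ 2 and so contains a circuit `D₁` and a second circuit avoiding a chosen element of `D₁`.
Nullities are never formed: all inequalities are stated additively in `ℕ∞`.
-/

open Set

variable {α : Type*}

/-- A circuit of a matroid: a minimal dependent set. -/
def Matroid.IsCircuit' (M : Matroid α) (C : Set α) : Prop :=
  M.Dep C ∧ ∀ D, D ⊂ C → ¬ M.Dep D

/-- The rank (in `ℕ∞`) of a set in a matroid: the supremum of the cardinalities
of independent subsets. -/
noncomputable def Matroid.rk' (M : Matroid α) (X : Set α) : ℕ∞ :=
  ⨆ I : {I : Set α // M.Indep I ∧ I ⊆ X}, (I : Set α).encard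

/-- Two distinct circuits `C₁, C₂` form a modular pair if `C₁ ∪ C₂` does not
properly contain the union of two distinct circuits of `M`. -/
def Matroid.ModularPairOfCircuits (M : Matroid α) (C₁ C₂ : Set α) : Prop :=
  C₁ ≠ C₂ ∧ ∀ D₁ D₂, M.IsCircuit' D₁ → M.IsCircuit' D₂ → D₁ ≠ D₂ →
    ¬ (D₁ ∪ D₂ ⊂ C₁ ∪ C₂)

namespace Matroid

variable {M : Matroid α} {X Y C C₁ C₂ D₁ D₂ : Set α} {e : α}

lemma rk'_eq_eRk (M : Matroid α) (X : Set α) : M.rk' X = M.eRk X := by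
  refine le_antisymm (iSup_le fun I ↦ I.2.1.encard_le_eRk_of_subset I.2.2) ?_
  obtain ⟨I, hI⟩ := M.exists_isBasis' X
  exact hI.eRk_eq_encard ▸ le_iSup_of_le ⟨I, hI.indep, hI.subset⟩ le_rfl

lemma isCircuit'_iff : M.IsCircuit' C ↔ M.IsCircuit C :=
  Set.minimal_iff_forall_ssubset.symm

lemma modularPairOfCircuits_iff : M.ModularPairOfCircuits C₁ C₂ ↔ C₁ ≠ C₂ ∧
    ∀ D₁ D₂, M.IsCircuit D₁ → M.IsCircuit D₂ → D₁ ≠ D₂ → ¬ D₁ ∪ D₂ ⊂ C₁ ∪ C₂ := by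
  simp only [ModularPairOfCircuits, isCircuit'_iff]

lemma IsCircuit.inter_indep (h₁ : M.IsCircuit C₁) (h₂ : M.IsCircuit C₂) (hne : C₁ ≠ C₂) :
    M.Indep (C₁ ∩ C₂) :=
  h₁.ssubset_indep <| inter_subset_left.ssubset_of_ne fun h ↦
    hne <| h₁.eq_of_subset_isCircuit h₂ (h ▸ inter_subset_right)

lemma IsCircuit.eRk_add_eRk_add_two (h₁ : M.IsCircuit C₁) (h₂ : M.IsCircuit C₂)
    (hne : C₁ ≠ C₂) :
    M.eRk C₁ + M.eRk C₂ + 2 = (C₁ ∪ C₂).encard + M.eRk (C₁ ∩ C₂) := by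
  rw [(h₁.inter_indep h₂ hne).eRk_eq_encard, encard_union_add_encard_inter,
    ← h₁.eRk_add_one_eq, ← h₂.eRk_add_one_eq]
  ring

lemma IsCircuit.eRk_union_add_two_le (h₁ : M.IsCircuit C₁) (h₂ : M.IsCircuit C₂)
    (hne : C₁ ≠ C₂) : M.eRk (C₁ ∪ C₂) + 2 ≤ (C₁ ∪ C₂).encard := by
  obtain hi | hi := eq_or_ne (M.eRk (C₁ ∩ C₂)) ⊤
  · have hle : M.eRk (C₁ ∩ C₂) ≤ (C₁ ∪ C₂).encard :=
      (M.eRk_le_encard _).trans (encard_mono (inter_subset_left.trans subset_union_left))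
    rw [hi, top_le_iff] at hle
    simp [hle]
  refine (ENat.add_le_add_iff_right hi).1 ?_
  calc M.eRk (C₁ ∪ C₂) + 2 + M.eRk (C₁ ∩ C₂)
      = M.eRk (C₁ ∩ C₂) + M.eRk (C₁ ∪ C₂) + 2 := by ring
    _ ≤ M.eRk C₁ + M.eRk C₂ + 2 := by grw [M.eRk_inter_add_eRk_union_le]
    _ = (C₁ ∪ C₂).encard + M.eRk (C₁ ∩ C₂) := h₁.eRk_add_eRk_add_two h₂ hne

lemma IsCircuit.eRk_union_add_eRk_inter_eq_iff (h₁ : M.IsCircuit C₁) (h₂ : M.IsCircuit C₂)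
    (hne : C₁ ≠ C₂) (hfin : (C₁ ∪ C₂).Finite) :
    M.eRk (C₁ ∪ C₂) + M.eRk (C₁ ∩ C₂) = M.eRk C₁ + M.eRk C₂ ↔
      M.eRk (C₁ ∪ C₂) + 2 = (C₁ ∪ C₂).encard := by
  have hi : M.eRk (C₁ ∩ C₂) ≠ ⊤ := eRk_ne_top_iff.2 <|
    M.isRkFinite_of_finite (hfin.subset (inter_subset_left.trans subset_union_left))
  refine (ENat.add_left_injective_of_ne_top (n := 2) (by simp)).eq_iff.symm.trans ?_
  rw [h₁.eRk_add_eRk_add_two h₂ hne, add_right_comm]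
  exact (ENat.add_left_injective_of_ne_top hi).eq_iff

lemma eRk_sdiff_singleton_add_le {k : ℕ∞} (he : e ∈ X) (h : M.eRk X + (k + 1) ≤ X.encard) :
    M.eRk (X \ {e}) + k ≤ (X \ {e}).encard := by
  rw [← ENat.add_le_add_iff_right ENat.one_ne_top, encard_sdiff_singleton_add_one he, add_assoc]
  grw [M.eRk_mono sdiff_subset]
  exact h

lemma dep_of_eRk_add_one_le (hX : X.Finite) (hXE : X ⊆ M.E) (h : M.eRk X + 1 ≤ X.encard) :
    M.Dep X :=
  (eRk_lt_encard_iff_dep_of_finite hX hXE).1 <|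
    (ENat.add_one_le_iff (eRk_ne_top_iff.2 (M.isRkFinite_of_finite hX))).1 h

lemma exists_isCircuit_ne_subset (hX : X.Finite) (hXE : X ⊆ M.E)
    (h : M.eRk X + 2 ≤ X.encard) :
    ∃ D₁ D₂, M.IsCircuit D₁ ∧ M.IsCircuit D₂ ∧ D₁ ≠ D₂ ∧ D₁ ∪ D₂ ⊆ X := by
  rw [← one_add_one_eq_two] at h
  have hdep : M.Dep X := dep_of_eRk_add_one_le hX hXE (le_trans (by gcongr; exact le_self_add) h)
  obtain ⟨D₁, hD₁X, hD₁⟩ := hdep.exists_isCircuit_subset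
  obtain ⟨f, hf⟩ := hD₁.nonempty
  obtain ⟨D₂, hD₂X, hD₂⟩ := (dep_of_eRk_add_one_le hX.sdiff (sdiff_subset.trans hXE)
    (eRk_sdiff_singleton_add_le (hD₁X hf) h)).exists_isCircuit_subset
  exact ⟨D₁, D₂, hD₁, hD₂, fun h ↦ (hD₂X (h ▸ hf)).2 rfl,
    union_subset hD₁X (hD₂X.trans sdiff_subset)⟩

lemma exists_isCircuit_ne_union_ssubset (hX : X.Finite) (hXE : X ⊆ M.E)
    (h : M.eRk X + 3 ≤ X.encard) :
    ∃ D₁ D₂, M.IsCircuit D₁ ∧ M.IsCircuit D₂ ∧ D₁ ≠ D₂ ∧ D₁ ∪ D₂ ⊂ X := by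
  obtain ⟨e, he⟩ : X.Nonempty := nonempty_of_encard_ne_zero fun h0 ↦ by simp [h0] at h
  obtain ⟨D₁, D₂, hD₁, hD₂, hne, hsub⟩ := exists_isCircuit_ne_subset hX.sdiff
    (sdiff_subset.trans hXE) (eRk_sdiff_singleton_add_le he (k := 2) h)
  exact ⟨D₁, D₂, hD₁, hD₂, hne, hsub.trans_ssubset (sdiff_singleton_ssubset.2 he)⟩

lemma eRk_add_encard_le_of_subset (hYX : Y ⊆ X) : M.eRk X + Y.encard ≤ M.eRk Y + X.encard :=
  calc M.eRk X + Y.encard = M.eRk (Y ∪ X \ Y) + Y.encard := by rw [union_sdiff_cancel hYX]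
    _ ≤ M.eRk Y + (X \ Y).encard + Y.encard := by grw [M.eRk_union_le_eRk_add_encard]
    _ = M.eRk Y + X.encard := by rw [add_assoc, encard_sdiff_add_encard_of_subset hYX]

lemma IsCircuit.eRk_sdiff_singleton (hC : M.IsCircuit C) (hCX : C ⊆ X) (he : e ∈ C) :
    M.eRk (X \ {e}) = M.eRk X := by
  have hcl : e ∈ M.closure (X \ {e}) := M.closure_subset_closure
    (sdiff_subset_sdiff_left hCX) (hC.mem_closure_sdiff_singleton_of_mem he)
  rw [← eRk_closure_eq, ← closure_insert_eq_of_mem_closure hcl, insert_sdiff_singleton,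
    insert_eq_of_mem (hCX he), eRk_closure_eq]

lemma eRk_add_encard_add_one_le (hYX : Y ⊂ X) (hX : ∀ e ∈ X, ∃ C ⊆ X, M.IsCircuit C ∧ e ∈ C) :
    M.eRk X + Y.encard + 1 ≤ M.eRk Y + X.encard := by
  obtain ⟨e, heX, heY⟩ := exists_of_ssubset hYX
  obtain ⟨C, hCX, hC, heC⟩ := hX e heX
  calc M.eRk X + Y.encard + 1 = M.eRk (X \ {e}) + Y.encard + 1 := by
        rw [hC.eRk_sdiff_singleton hCX heC]
    _ ≤ M.eRk Y + (X \ {e}).encard + 1 := by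
        grw [eRk_add_encard_le_of_subset (subset_sdiff_singleton hYX.subset heY)]
    _ = M.eRk Y + X.encard := by rw [add_assoc, encard_sdiff_singleton_add_one heX]

lemma IsCircuit.not_union_ssubset_of_eRk_add_two_eq (hD₁ : M.IsCircuit D₁)
    (hD₂ : M.IsCircuit D₂) (hne : D₁ ≠ D₂) (hX : X.Finite)
    (hXc : ∀ e ∈ X, ∃ C ⊆ X, M.IsCircuit C ∧ e ∈ C) (h : M.eRk X + 2 = X.encard) :
    ¬ D₁ ∪ D₂ ⊂ X := by
  intro hss
  have hfin : M.eRk (D₁ ∪ D₂) + M.eRk X + 2 ≠ ⊤ := by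
    simp [M.isRkFinite_of_finite hX, M.isRkFinite_of_finite (hX.subset hss.subset)]
  refine (ENat.lt_add_one_iff hfin |>.2 le_rfl).not_ge ?_
  calc M.eRk (D₁ ∪ D₂) + M.eRk X + 2 + 1 = M.eRk X + (M.eRk (D₁ ∪ D₂) + 2) + 1 := by ring
    _ ≤ M.eRk X + (D₁ ∪ D₂).encard + 1 := by grw [hD₁.eRk_union_add_two_le hD₂ hne]
    _ ≤ M.eRk (D₁ ∪ D₂) + X.encard := eRk_add_encard_add_one_le hss hXc
    _ = M.eRk (D₁ ∪ D₂) + M.eRk X + 2 := by rw [← h, add_assoc]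

end Matroid

/-- Distinct circuits `C₁, C₂` of a matroid form a modular pair iff
`r(C₁ ∪ C₂) + r(C₁ ∩ C₂) = r(C₁) + r(C₂)`. -/
theorem modularPair_iff_rank (M : Matroid α) (hE : M.E.Finite) (C₁ C₂ : Set α)
    (h₁ : M.IsCircuit' C₁) (h₂ : M.IsCircuit' C₂) (hne : C₁ ≠ C₂) :
    M.ModularPairOfCircuits C₁ C₂ ↔
      M.rk' (C₁ ∪ C₂) + M.rk' (C₁ ∩ C₂) = M.rk' C₁ + M.rk' C₂ := by
  rw [Matroid.isCircuit'_iff] at h₁ h₂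
  have hXE : C₁ ∪ C₂ ⊆ M.E := union_subset h₁.subset_ground h₂.subset_ground
  have hfin : (C₁ ∪ C₂).Finite := hE.subset hXE
  simp only [Matroid.rk'_eq_eRk]
  rw [h₁.eRk_union_add_eRk_inter_eq_iff h₂ hne hfin, Matroid.modularPairOfCircuits_iff,
    and_iff_right hne]
  refine ⟨fun hmod ↦ ?_, fun heq D₁ D₂ hD₁ hD₂ hD ↦ ?_⟩
  · refine (h₁.eRk_union_add_two_le h₂ hne).antisymm (not_lt.1 fun hlt ↦ ?_)
    obtain ⟨D₁, D₂, hD₁, hD₂, hD, hss⟩ := Matroid.exists_isCircuit_ne_union_ssubset hfin hXE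
      (by rw [← two_add_one_eq_three, ← add_assoc]; exact Order.add_one_le_of_lt hlt)
    exact hmod D₁ D₂ hD₁ hD₂ hD hss
  refine hD₁.not_union_ssubset_of_eRk_add_two_eq hD₂ hD hfin (fun e he ↦ ?_) heq
  exact he.elim (fun he ↦ ⟨C₁, subset_union_left, h₁, he⟩)
    (fun he ↦ ⟨C₂, subset_union_right, h₂, he⟩)
end

section
/- Let 𝒞 be a collection of nonempty, pairwise incomparable subsets of a finite set E such that every modular pair C₁, C₂ in 𝒞 satisfies circuit elimination (for each e ∈ C₁ ∩ C₂ there exists C₃ ∈ 𝒞 with C₃ ⊆ (C₁ ∪ C₂) \ {e}). Then 𝒞 is the set of circuits of a matroid on E. -/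
open Set

variable {α : Type*}

/-! Take as independent sets those containing no member of `𝒞`. Elimination for modular pairs
already gives elimination for all pairs, by induction on `|C₁ ∪ C₂|`: if `C₁ ∪ C₂` properly
contains `D₁ ∪ D₂`, either one of the `Dᵢ` avoids `e` or `e` can be eliminated from the smaller
pair. Full elimination makes the member of `𝒞` inside `insert e K` unique when `K` is
independent, so for `e ∈ I \ K` some `f ∈ K \ I` can be exchanged for `e` keeping `K`
independent; repeating such exchanges on a larger independent `K` until `I ⊆ K` proves
augmentation. -/

namespace SetFamily

def CircuitFree (𝒞 : Set (Set α)) (I : Set α) : Prop :=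
  ∀ C ∈ 𝒞, ¬ C ⊆ I

def CircuitElimination (𝒞 : Set (Set α)) : Prop :=
  ∀ C₁ ∈ 𝒞, ∀ C₂ ∈ 𝒞, C₁ ≠ C₂ → ∀ e ∈ C₁ ∩ C₂, ∃ C₃ ∈ 𝒞, C₃ ⊆ (C₁ ∪ C₂) \ {e}

variable {𝒞 : Set (Set α)} {I K : Set α} {e : α}

lemma CircuitFree.subset (hK : CircuitFree 𝒞 K) (hIK : I ⊆ K) : CircuitFree 𝒞 I :=
  fun C hC hCI => hK C hC (hCI.trans hIK)

lemma circuitElimination_of_modular (hfin : ∀ C ∈ 𝒞, C.Finite)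
    (helim : ∀ C₁ ∈ 𝒞, ∀ C₂ ∈ 𝒞, C₁ ≠ C₂ →
      (∀ D₁ ∈ 𝒞, ∀ D₂ ∈ 𝒞, D₁ ≠ D₂ → ¬ (D₁ ∪ D₂ ⊂ C₁ ∪ C₂)) →
      ∀ e ∈ C₁ ∩ C₂, ∃ C₃ ∈ 𝒞, C₃ ⊆ (C₁ ∪ C₂) \ {e}) :
    CircuitElimination 𝒞 := by
  intro C₁ h₁ C₂ h₂
  induction hn : (C₁ ∪ C₂).ncard using Nat.strong_induction_on generalizing C₁ C₂ with
  | _ n ih =>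
  intro hne e he
  by_cases hmod : ∀ D₁ ∈ 𝒞, ∀ D₂ ∈ 𝒞, D₁ ≠ D₂ → ¬ (D₁ ∪ D₂ ⊂ C₁ ∪ C₂)
  · exact helim C₁ h₁ C₂ h₂ hne hmod e he
  push Not at hmod
  obtain ⟨D₁, hD₁, D₂, hD₂, hD, hss⟩ := hmod
  by_cases he₁ : e ∈ D₁
  · by_cases he₂ : e ∈ D₂
    · have hlt : (D₁ ∪ D₂).ncard < n :=
        hn ▸ ncard_lt_ncard hss ((hfin C₁ h₁).union (hfin C₂ h₂))
      obtain ⟨C₃, hC₃, hC₃D⟩ := ih _ hlt D₁ hD₁ D₂ hD₂ rfl hD e ⟨he₁, he₂⟩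
      exact ⟨C₃, hC₃, hC₃D.trans (sdiff_subset_sdiff_left hss.subset)⟩
    · exact ⟨D₂, hD₂, subset_sdiff_singleton (subset_union_right.trans hss.subset) he₂⟩
  · exact ⟨D₁, hD₁, subset_sdiff_singleton (subset_union_left.trans hss.subset) he₁⟩

namespace CircuitElimination

variable (h : CircuitElimination 𝒞)
include h

lemma eq_of_subset_insert (hK : CircuitFree 𝒞 K) {C₁ C₂ : Set α} (hC₁ : C₁ ∈ 𝒞) (hC₂ : C₂ ∈ 𝒞)
    (hC₁K : C₁ ⊆ insert e K) (hC₂K : C₂ ⊆ insert e K) : C₁ = C₂ := by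
  have he : ∀ C ∈ 𝒞, C ⊆ insert e K → e ∈ C := fun C hC hCK => by
    by_contra heC
    exact hK C hC ((subset_insert_iff_of_notMem heC).1 hCK)
  by_contra hne
  obtain ⟨C₃, hC₃, hC₃sub⟩ := h C₁ hC₁ C₂ hC₂ hne e ⟨he C₁ hC₁ hC₁K, he C₂ hC₂ hC₂K⟩
  exact hK C₃ hC₃ (hC₃sub.trans (sdiff_singleton_subset_iff.2 (union_subset hC₁K hC₂K)))

lemma exists_exchange (hI : CircuitFree 𝒞 I) (hK : CircuitFree 𝒞 K) (heI : e ∈ I)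
    (hKI : (K \ I).Nonempty) : ∃ f ∈ K \ I, CircuitFree 𝒞 (insert e (K \ {f})) := by
  obtain ⟨f, hf⟩ := hKI
  by_contra! hdep
  simp only [CircuitFree, not_forall, not_not] at hdep
  have hsub : ∀ f, insert e (K \ {f}) ⊆ insert e K := fun f => insert_subset_insert sdiff_subset
  obtain ⟨C, hC, hCf⟩ := hdep f hf
  obtain ⟨g, hgC, hgI⟩ := not_subset.1 (hI C hC)
  have hgK : g ∈ K \ I := by
    refine ⟨((hCf hgC).resolve_left ?_).1, hgI⟩
    rintro rfl
    exact hgI heI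
  obtain ⟨D, hD, hDg⟩ := hdep g hgK
  have hCD : C = D :=
    h.eq_of_subset_insert hK hC hD (hCf.trans (hsub f)) (hDg.trans (hsub g))
  rcases hDg (hCD ▸ hgC) with rfl | hg
  · exact hgI heI
  · exact hg.2 rfl

lemma exists_insert_circuitFree_of_ncard_lt (hI : CircuitFree 𝒞 I) (hK : CircuitFree 𝒞 K)
    (hIfin : I.Finite) (hKfin : K.Finite) (hlt : I.ncard < K.ncard) :
    ∃ x ∈ K \ I, CircuitFree 𝒞 (insert x I) := by
  induction hn : (I \ K).ncard using Nat.strong_induction_on generalizing K with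
  | _ n ih =>
  have hKI : (K \ I).Nonempty := sdiff_nonempty_of_ncard_lt_ncard hlt hIfin
  by_cases hIK : I ⊆ K
  · obtain ⟨x, hx⟩ := hKI
    exact ⟨x, hx, hK.subset (insert_subset hx.1 hIK)⟩
  obtain ⟨e, heI, heK⟩ := not_subset.1 hIK
  obtain ⟨f, hf, hT⟩ := h.exists_exchange hI hK heI hKI
  have hTcard : (insert e (K \ {f})).ncard = K.ncard := ncard_exchange heK hf.1
  have hIT : I \ insert e (K \ {f}) ⊂ I \ K := by
    refine (ssubset_iff_of_subset ?_).2 ⟨e, ⟨heI, heK⟩, fun he => he.2 (mem_insert e _)⟩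
    rintro x ⟨hxI, hxK⟩
    exact ⟨hxI, fun hx => hxK (mem_insert_of_mem e ⟨hx, fun hxf => hf.2 (hxf ▸ hxI)⟩)⟩
  obtain ⟨x, hx, hxI⟩ := ih _ (hn ▸ ncard_lt_ncard hIT hIfin.sdiff) hT
    (hKfin.sdiff.insert e) (hTcard ▸ hlt) rfl
  refine ⟨x, ⟨?_, hx.2⟩, hxI⟩
  rcases hx.1 with rfl | hxK
  · exact absurd heI hx.2
  · exact hxK.1

end CircuitElimination

variable {E : Set α}

noncomputable def matroid (hE : E.Finite) (h : CircuitElimination 𝒞) (h𝒞 : ∅ ∉ 𝒞) :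
    Matroid α :=
  (IndepMatroid.ofFinite hE (fun I => I ⊆ E ∧ CircuitFree 𝒞 I)
    ⟨empty_subset E, fun C hC hC0 => h𝒞 (subset_empty_iff.1 hC0 ▸ hC)⟩
    (fun _ _ hJ hIJ => ⟨hIJ.trans hJ.1, hJ.2.subset hIJ⟩)
    (fun _ _ hI hJ hlt => by
      obtain ⟨x, hx, hxI⟩ := h.exists_insert_circuitFree_of_ncard_lt hI.2 hJ.2
        (hE.subset hI.1) (hE.subset hJ.1) hlt
      exact ⟨x, hx.1, hx.2, insert_subset (hJ.1 hx.1) hI.1, hxI⟩)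
    (fun _ hI => hI.1)).matroid

variable {hE : E.Finite} {h : CircuitElimination 𝒞} {h𝒞 : ∅ ∉ 𝒞}

@[simp] lemma matroid_E : (matroid hE h h𝒞).E = E := by
  simp [matroid]

lemma matroid_indep_iff {I : Set α} :
    (matroid hE h h𝒞).Indep I ↔ I ⊆ E ∧ CircuitFree 𝒞 I := by
  simp [matroid]

lemma matroid_dep_iff {X : Set α} :
    (matroid hE h h𝒞).Dep X ↔ (∃ C ∈ 𝒞, C ⊆ X) ∧ X ⊆ E := by
  simp only [Matroid.Dep, matroid_indep_iff, matroid_E, CircuitFree, not_and, not_forall, not_not,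
    exists_prop]
  tauto

lemma matroid_isCircuit'_iff (hsub : ∀ C ∈ 𝒞, C ⊆ E)
    (hinc : ∀ C ∈ 𝒞, ∀ D ∈ 𝒞, C ⊆ D → C = D) {C : Set α} :
    (matroid hE h h𝒞).IsCircuit' C ↔ C ∈ 𝒞 := by
  simp only [Matroid.IsCircuit', matroid_dep_iff]
  constructor
  · rintro ⟨⟨⟨D, hD, hDC⟩, -⟩, hmin⟩
    obtain rfl | hDC := hDC.eq_or_ssubset
    · exact hD
    · exact absurd ⟨⟨D, hD, subset_rfl⟩, hsub D hD⟩ (hmin D hDC)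
  · refine fun hC => ⟨⟨⟨C, hC, subset_rfl⟩, hsub C hC⟩, ?_⟩
    rintro D hDC ⟨⟨C', hC', hC'D⟩, -⟩
    exact hDC.not_subset (hinc C' hC' C hC (hC'D.trans hDC.subset) ▸ hC'D)

end SetFamily

open SetFamily in
/-- If `𝒞` is a collection of nonempty, pairwise incomparable subsets of a
finite set `E` such that every modular pair in `𝒞` satisfies circuit
elimination, then `𝒞` is the set of circuits of a matroid on `E`. -/
theorem circuits_of_modular_elimination (E : Set α) (hE : E.Finite)
    (𝒞 : Set (Set α))
    (hsub : ∀ C ∈ 𝒞, C ⊆ E)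
    (hne : ∀ C ∈ 𝒞, C.Nonempty)
    (hinc : ∀ C ∈ 𝒞, ∀ D ∈ 𝒞, C ⊆ D → C = D)
    (helim : ∀ C₁ ∈ 𝒞, ∀ C₂ ∈ 𝒞, C₁ ≠ C₂ →
      (∀ D₁ ∈ 𝒞, ∀ D₂ ∈ 𝒞, D₁ ≠ D₂ → ¬ (D₁ ∪ D₂ ⊂ C₁ ∪ C₂)) →
      ∀ e ∈ C₁ ∩ C₂, ∃ C₃ ∈ 𝒞, C₃ ⊆ (C₁ ∪ C₂) \ {e}) :
    ∃ M : Matroid α, M.E = E ∧ ∀ C, C ∈ 𝒞 ↔ M.IsCircuit' C := by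
  have hfin : ∀ C ∈ 𝒞, C.Finite := fun C hC => hE.subset (hsub C hC)
  exact ⟨matroid hE (circuitElimination_of_modular hfin helim) (fun h => (hne ∅ h).ne_empty rfl),
    matroid_E, fun C => (matroid_isCircuit'_iff hsub hinc).symm⟩
end

section
/- Every fuzzy ring (K; +; ·; ε; K₀) is weakly isomorphic to the fuzzy ring (K'; +; ·; ε'; K₀') where (K', +, ·) is the group semiring ℕ[K*], ε' = ε viewed as an element of K* ⊆ ℕ[K*], and K₀' = {Σ nₓ·x ∈ ℕ[K*] : Σ nₓ·x ∈ K₀ when evaluated in K}. In particular, the identity maps on K* give mutually inverse weak morphisms between K and K'. -/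
/-- A fuzzy ring in the sense of Dress–Wenzel: a tuple `(K; +; ·; ε; K₀)`
satisfying (FR0)–(FR7). -/
structure FuzzyRing (K : Type*) where
  add : K → K → K
  mul : K → K → K
  zero : K
  one : K
  eps : K
  K0 : Set K
  add_comm : ∀ x y, add x y = add y x
  add_assoc : ∀ x y z, add (add x y) z = add x (add y z)
  zero_add : ∀ x, add zero x = x
  mul_comm : ∀ x y, mul x y = mul y x
  mul_assoc : ∀ x y z, mul (mul x y) z = mul x (mul y z)
  one_mul : ∀ x, mul one x = x
  zero_mul : ∀ x, mul zero x = zero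
  unit_distrib : ∀ α, (∃ β, mul α β = one) →
    ∀ x y, mul α (add x y) = add (mul α x) (mul α y)
  eps_sq : mul eps eps = one
  K0_add : ∀ a ∈ K0, ∀ b ∈ K0, add a b ∈ K0
  K0_mul : ∀ x, ∀ a ∈ K0, mul x a ∈ K0
  zero_mem_K0 : zero ∈ K0
  one_not_mem_K0 : one ∉ K0
  fr5 : ∀ α, (∃ β, mul α β = one) → (add one α ∈ K0 ↔ α = eps)
  fr6 : ∀ x₁ x₂ y₁ y₂, add x₁ y₁ ∈ K0 → add x₂ y₂ ∈ K0 →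
    add (mul x₁ x₂) (mul eps (mul y₁ y₂)) ∈ K0
  fr7 : ∀ x y z₁ z₂, add x (mul y (add z₁ z₂)) ∈ K0 →
    add (add x (mul y z₁)) (mul y z₂) ∈ K0

variable {K : Type*}

/-- The units `K*` of a fuzzy ring. -/
def FuzzyRing.IsUnit (F : FuzzyRing K) (a : K) : Prop := ∃ b, F.mul a b = F.one

theorem FuzzyRing.add_leftComm (F : FuzzyRing K) :
    LeftCommutative F.add :=
  ⟨fun a b c => by
    rw [← F.add_assoc, F.add_comm a b, F.add_assoc]⟩

/-- Evaluation of a finite multiset (formal `ℕ`-linear combination) in `K`. -/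
def FuzzyRing.eval (F : FuzzyRing K) (A : Multiset K) : K :=
  letI := F.add_leftComm
  Multiset.foldr F.add F.zero A

namespace FuzzyRing

variable (F : FuzzyRing K)

theorem add_zero' (x : K) : F.add x F.zero = x := by rw [F.add_comm, F.zero_add]

theorem mul_zero' (x : K) : F.mul x F.zero = F.zero := by rw [F.mul_comm, F.zero_mul]

theorem eval_zero : F.eval 0 = F.zero := rfl

theorem eval_cons (a : K) (s : Multiset K) :
    F.eval (a ::ₘ s) = F.add a (F.eval s) := by
  letI := F.add_leftComm
  simp [FuzzyRing.eval]

theorem eval_add (s t : Multiset K) :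
    F.eval (s + t) = F.add (F.eval s) (F.eval t) := by
  induction s using Multiset.induction with
  | empty => simp [eval_zero, F.zero_add]
  | cons a s ih => rw [Multiset.cons_add, eval_cons, eval_cons, ih, F.add_assoc]

theorem add_right_swap (t x y : K) :
    F.add (F.add t x) y = F.add (F.add t y) x := by
  rw [F.add_assoc, F.add_comm x y, ← F.add_assoc]

theorem isUnit_mul {a b : K} (ha : F.IsUnit a) (hb : F.IsUnit b) :
    F.IsUnit (F.mul a b) := by
  obtain ⟨a', ha⟩ := ha
  obtain ⟨b', hb⟩ := hb
  refine ⟨F.mul a' b', ?_⟩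
  have : F.mul (F.mul a b) (F.mul a' b') = F.mul (F.mul a a') (F.mul b b') := by
    rw [F.mul_assoc a b, ← F.mul_assoc b a' b', F.mul_comm b a',
      F.mul_assoc a' b b', ← F.mul_assoc a a']
  rw [this, ha, hb, F.one_mul]

/-- For a unit `u`, `u · eval s = eval (map (u·) s)`. -/
theorem unit_mul_eval {u : K} (hu : F.IsUnit u) (s : Multiset K) :
    F.mul u (F.eval s) = F.eval (s.map (F.mul u)) := by
  induction s using Multiset.induction with
  | empty => simp [eval_zero, F.mul_zero']
  | cons a s ih =>
      rw [eval_cons, F.unit_distrib u hu, ih, Multiset.map_cons, eval_cons]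

/-- FR7-based expansion: one can expand `y·(eval s)` in a `K₀`-membership. -/
theorem expand_mul (s : Multiset K) :
    ∀ t y : K, F.add t (F.mul y (F.eval s)) ∈ F.K0 →
      F.add t (F.eval (s.map (F.mul y))) ∈ F.K0 := by
  induction s using Multiset.induction with
  | empty => intro t y h; simpa [eval_zero, F.mul_zero'] using h
  | cons a s ih =>
      intro t y h
      rw [eval_cons] at h
      have h2 := F.fr7 t y a (F.eval s) h
      have h3 := ih (F.add t (F.mul y a)) y h2
      rw [Multiset.map_cons, eval_cons, ← F.add_assoc]
      exact h3

/-- FR7-based expansion of a product of two formal sums. -/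
theorem expand_mul_mul (s : Multiset K) :
    ∀ (t : K) (r : Multiset K),
      F.add t (F.mul (F.eval s) (F.eval r)) ∈ F.K0 →
      F.add t (F.eval (s.bind fun x => r.map (F.mul x))) ∈ F.K0 := by
  induction s using Multiset.induction with
  | empty => intro t r h; simpa [eval_zero, F.zero_mul] using h
  | cons a s ih =>
      intro t r h
      rw [eval_cons, F.mul_comm] at h
      have h2 := F.fr7 t (F.eval r) a (F.eval s) h
      rw [F.mul_comm (F.eval r) (F.eval s)] at h2
      have h3 := ih (F.add t (F.mul (F.eval r) a)) r h2
      rw [F.add_right_swap] at h3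
      rw [F.mul_comm (F.eval r) a] at h3
      have h4 := F.expand_mul r (F.add t (F.eval (s.bind fun x => r.map (F.mul x)))) a h3
      rw [Multiset.cons_bind, eval_add, F.add_comm (F.eval (r.map (F.mul a))),
        ← F.add_assoc]
      exact h4

end FuzzyRing

/-- The convolution product on multisets of units. -/
def gsMul (F : FuzzyRing K) (A B : Multiset {a : K // F.IsUnit a}) :
    Multiset {a : K // F.IsUnit a} :=
  A.bind fun a => B.bind fun b => {⟨F.mul a.1 b.1, F.isUnit_mul a.2 b.2⟩}

theorem map_val_gsMul (F : FuzzyRing K) (A B : Multiset {a : K // F.IsUnit a}) :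
    Multiset.map Subtype.val (gsMul F A B) =
      (A.map Subtype.val).bind fun x => (B.map Subtype.val).map (F.mul x) := by
  simp [gsMul, Multiset.map_bind, Multiset.bind_map, Multiset.bind_singleton,
    Function.comp]

theorem card_gsMul (F : FuzzyRing K) (A B : Multiset {a : K // F.IsUnit a}) :
    Multiset.card (gsMul F A B) = Multiset.card A * Multiset.card B := by
  simp [gsMul, Multiset.card_bind, Function.comp, Multiset.bind_singleton,
    Multiset.map_const', Multiset.sum_replicate, Nat.smul_one_eq_cast, mul_comm]

theorem FuzzyRing.eval_singleton (F : FuzzyRing K) (a : K) :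
    F.eval {a} = a := by
  rw [show ({a} : Multiset K) = a ::ₘ 0 from rfl, F.eval_cons, F.eval_zero,
    F.add_zero']

/-- Every fuzzy ring `K` is weakly isomorphic (via the identity on `K*`) to the
fuzzy ring `K'` whose underlying semiring is the group semiring `ℕ[K*]`
(realized as finite multisets of units), with `ε' = ε` and with null set
`K₀' = {Σ nₓ·x : Σ nₓ·x ∈ K₀ when evaluated in K}`. -/
theorem fuzzyRing_weakly_isomorphic_to_group_semiring (F : FuzzyRing K) :
    ∃ F' : FuzzyRing (Multiset {a : K // F.IsUnit a}),
      -- the additive structure of `F'` is that of the group semiring `ℕ[K*]`: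
      F'.add = (· + ·) ∧ F'.zero = 0 ∧
      -- the multiplicative structure of `F'` is the convolution product of
      -- `ℕ[K*]`, with unit the formal sum `1·1`:
      (∀ A B, Multiset.map Subtype.val (F'.mul A B) =
        A.bind fun a => B.map fun b => F.mul a.1 b.1) ∧
      F'.one = {⟨F.one, F.one, F.one_mul F.one⟩} ∧
      -- `ε'` is `ε`, viewed as an element of `K* ⊆ ℕ[K*]`:
      F'.eps = {⟨F.eps, F.eps, F.eps_sq⟩} ∧
      -- `K₀'` consists of the formal sums that evaluate into `K₀`, so that the
      -- identity maps on `K*` are mutually inverse weak morphisms `K ↔ K'`: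
      (∀ A, A ∈ F'.K0 ↔ F.eval (A.map Subtype.val) ∈ F.K0) := by
  have hepsu : F.IsUnit F.eps := ⟨F.eps, F.eps_sq⟩
  refine ⟨{
    add := (· + ·)
    mul := gsMul F
    zero := 0
    one := {⟨F.one, F.one, F.one_mul F.one⟩}
    eps := {⟨F.eps, F.eps, F.eps_sq⟩}
    K0 := {A | F.eval (A.map Subtype.val) ∈ F.K0}
    add_comm := fun x y => add_comm x y
    add_assoc := fun x y z => add_assoc x y z
    zero_add := fun x => zero_add x
    mul_comm := ?_
    mul_assoc := ?_
    one_mul := ?_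
    zero_mul := fun x => Multiset.zero_bind _
    unit_distrib := ?_
    eps_sq := ?_
    K0_add := ?_
    K0_mul := ?_
    zero_mem_K0 := ?_
    one_not_mem_K0 := ?_
    fr5 := ?_
    fr6 := ?_
    fr7 := ?_ }, rfl, rfl, ?_, rfl, rfl, fun A => Iff.rfl⟩
  -- mul_comm
  · intro A B
    rw [gsMul, gsMul, Multiset.bind_bind]
    refine Multiset.bind_congr fun b _ => Multiset.bind_congr fun a _ => ?_
    exact congrArg (fun x => ({x} : Multiset _)) (Subtype.ext (F.mul_comm a.1 b.1))
  -- mul_assoc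
  · intro A B C
    simp only [gsMul, Multiset.bind_assoc, Multiset.singleton_bind]
    refine Multiset.bind_congr fun a _ => Multiset.bind_congr fun b _ =>
      Multiset.bind_congr fun c _ => ?_
    exact congrArg (fun x => ({x} : Multiset _)) (Subtype.ext (F.mul_assoc a.1 b.1 c.1))
  -- one_mul
  · intro A
    have h1 : gsMul F {⟨F.one, F.one, F.one_mul F.one⟩} A = A.bind fun b => {b} := by
      rw [gsMul, Multiset.singleton_bind]
      exact Multiset.bind_congr fun b _ =>
        congrArg (fun x => ({x} : Multiset _)) (Subtype.ext (F.one_mul b.1))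
    rw [h1, Multiset.bind_singleton, Multiset.map_id']
  -- unit_distrib
  · intro α _ x y
    simp [gsMul, Multiset.add_bind, Multiset.bind_add]
  -- eps_sq
  · rw [gsMul, Multiset.singleton_bind, Multiset.singleton_bind]
    exact congrArg (fun x => ({x} : Multiset _)) (Subtype.ext F.eps_sq)
  -- K0_add
  · intro a ha b hb
    show F.eval ((a + b).map Subtype.val) ∈ F.K0
    rw [Multiset.map_add, F.eval_add]
    exact F.K0_add _ ha _ hb
  -- K0_mul
  · intro X A hA
    show F.eval ((gsMul F X A).map Subtype.val) ∈ F.K0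
    rw [map_val_gsMul]
    induction X using Multiset.induction with
    | empty => simpa [F.eval_zero] using F.zero_mem_K0
    | cons x X ih =>
        rw [Multiset.map_cons, Multiset.cons_bind, F.eval_add]
        refine F.K0_add _ ?_ _ ih
        rw [← F.unit_mul_eval x.2]
        exact F.K0_mul _ _ hA
  -- zero_mem_K0
  · show F.eval (Multiset.map Subtype.val 0) ∈ F.K0
    simpa [F.eval_zero] using F.zero_mem_K0
  -- one_not_mem_K0
  · intro h
    have h' : F.eval (Multiset.map Subtype.val
        ({⟨F.one, F.one, F.one_mul F.one⟩} : Multiset {a : K // F.IsUnit a})) ∈ F.K0 := h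
    rw [Multiset.map_singleton, F.eval_singleton] at h'
    exact F.one_not_mem_K0 h'
  -- fr5
  · intro α hα
    obtain ⟨β, hβ⟩ := hα
    have hcard : Multiset.card α * Multiset.card β = 1 := by
      rw [← card_gsMul F α β, hβ]; rfl
    obtain ⟨a, rfl⟩ := Multiset.card_eq_one.mp (Nat.eq_one_of_mul_eq_one_right hcard)
    have key : F.eval (Multiset.map Subtype.val
        (({⟨F.one, F.one, F.one_mul F.one⟩} : Multiset {a : K // F.IsUnit a}) + {a}))
        = F.add F.one a.1 := by
      rw [Multiset.map_add, Multiset.map_singleton, Multiset.map_singleton,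
        F.eval_add, F.eval_singleton, F.eval_singleton]
    constructor
    · intro h
      have h2 : F.add F.one a.1 ∈ F.K0 := by
        rw [← key]; exact h
      exact congrArg (fun x => ({x} : Multiset _)) (Subtype.ext ((F.fr5 a.1 a.2).mp h2))
    · intro h
      have ha : a.1 = F.eps := congrArg Subtype.val (Multiset.singleton_inj.mp h)
      show F.eval _ ∈ F.K0
      rw [key]
      exact (F.fr5 a.1 a.2).mpr ha
  -- fr6
  · intro X1 X2 Y1 Y2 h1 h2
    replace h1 : F.add (F.eval (X1.map Subtype.val)) (F.eval (Y1.map Subtype.val)) ∈ F.K0 := by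
      have := h1; rwa [Set.mem_setOf_eq, Multiset.map_add, F.eval_add] at this
    replace h2 : F.add (F.eval (X2.map Subtype.val)) (F.eval (Y2.map Subtype.val)) ∈ F.K0 := by
      have := h2; rwa [Set.mem_setOf_eq, Multiset.map_add, F.eval_add] at this
    have h6 := F.fr6 _ _ _ _ h1 h2
    rw [← F.mul_assoc, F.unit_mul_eval hepsu] at h6
    have h7 := F.expand_mul_mul _ _ _ h6
    rw [F.add_comm] at h7
    have h8 := F.expand_mul_mul _ _ _ h7
    rw [F.add_comm] at h8
    show F.eval (Multiset.map Subtype.val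
        (gsMul F X1 X2 + gsMul F {⟨F.eps, F.eps, F.eps_sq⟩} (gsMul F Y1 Y2))) ∈ F.K0
    rw [Multiset.map_add, F.eval_add, map_val_gsMul]
    have hms : Multiset.map Subtype.val
        (gsMul F {⟨F.eps, F.eps, F.eps_sq⟩} (gsMul F Y1 Y2)) =
        ((Y1.map Subtype.val).map (F.mul F.eps)).bind fun x =>
          (Y2.map Subtype.val).map (F.mul x) := by
      rw [map_val_gsMul, Multiset.map_singleton, Multiset.singleton_bind,
        map_val_gsMul]
      simp only [Multiset.map_bind, Multiset.bind_map, Multiset.map_map,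
        Function.comp]
      exact Multiset.bind_congr fun y _ => Multiset.map_congr rfl fun z _ =>
        (F.mul_assoc F.eps y z).symm
    rw [hms]
    exact h8
  -- fr7
  · intro X Y Z1 Z2 h
    have hd : gsMul F Y (Z1 + Z2) = gsMul F Y Z1 + gsMul F Y Z2 := by
      simp [gsMul, Multiset.add_bind, Multiset.bind_add]
    show (X + gsMul F Y Z1 + gsMul F Y Z2) ∈ {A | F.eval (A.map Subtype.val) ∈ F.K0}
    have h' : (X + gsMul F Y (Z1 + Z2)) ∈
        {A : Multiset {a : K // F.IsUnit a} | F.eval (A.map Subtype.val) ∈ F.K0} := h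
    rwa [hd, ← add_assoc] at h'
  -- the conclusion about `mul`
  · intro A B
    rw [map_val_gsMul]
    rw [Multiset.bind_map]
    exact Multiset.bind_congr fun a _ => by rw [Multiset.map_map]; rfl
end
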